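/- arXiv:1410.8349 — 2 statements merged into one kernel-verified Lean document; each statement's English description precedes it below -/
import Mathlib

section
/- If G is an undirected graph, then gn(G) ≥ |V(G)| − κ_f(G), where gn(G) is the asymptotic guessing number and κ_f(G) the fractional clique cover number. -/
/-- A pure strategy for the guessing game on the digraph with edge relation `E`
and alphabet `Fin s`: each player `v` guesses based only on the values of its
in-neighbours. -/
structure GuessStrategy (V : Type*) (E : V → V → Prop) (s : ℕ) where
  f : V → (V → Fin s) → Fin s
  local_dep : ∀ v a b, (∀ u, E u v → a u = b u) → f v a = f v b

/-- The number of assignments on which every player guesses correctly. -/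
noncomputable def winCount {V : Type*} [Fintype V] (E : V → V → Prop) (s : ℕ)
    (F : GuessStrategy V E s) : ℕ :=
  Nat.card {a : V → Fin s // ∀ v, F.f v a = a v}

/-- The winning probability of strategy `F` in the guessing game `(G,s)`. -/
noncomputable def winP {V : Type*} [Fintype V] (E : V → V → Prop) (s : ℕ)
    (F : GuessStrategy V E s) : ℝ :=
  (winCount E s F : ℝ) / (s ^ Fintype.card V : ℕ)

/-- The maximum winning probability over all strategies. -/
noncomputable def maxWinP {V : Type*} [Fintype V] (E : V → V → Prop) (s : ℕ) : ℝ :=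
  ⨆ F : GuessStrategy V E s, winP E s F

/-- The guessing number `gn(G,s) = |V(G)| + log_s (max winning probability)`. -/
noncomputable def gn {V : Type*} [Fintype V] (E : V → V → Prop) (s : ℕ) : ℝ :=
  Fintype.card V + Real.logb s (maxWinP E s)

/-- The `t`-uniform blowup of a digraph: each vertex is replaced by `t` copies. -/
def blowup {V : Type*} (E : V → V → Prop) (t : ℕ) : V × Fin t → V × Fin t → Prop :=
  fun p q => E p.1 q.1

/-- The minimum clique cover number `κ(G)`: the least number of cliques into which the
vertex set of `G` can be partitioned. -/
noncomputable def cliqueCoverNum {V : Type*} [Fintype V] [DecidableEq V]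
    (G : SimpleGraph V) : ℕ :=
  sInf {n | ∃ P : Finpartition (Finset.univ : Finset V),
    P.parts.card = n ∧ ∀ p ∈ P.parts, G.IsClique (p : Set V)}

/-- A fractional clique cover of `G`: a weighting `w : K(G) → [0,1]` of the cliques with
total weight at least `1` on the cliques containing any given vertex. -/
def IsFracCliqueCover {V : Type*} [Fintype V] [DecidableEq V] (G : SimpleGraph V)
    (w : Finset V → ℝ) : Prop :=
  (∀ k, 0 ≤ w k ∧ w k ≤ 1) ∧ (∀ k, w k ≠ 0 → G.IsClique (k : Set V)) ∧
  ∀ v : V, 1 ≤ ∑ k ∈ Finset.univ.filter (fun k : Finset V => v ∈ k), w k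

/-- A regular fractional clique cover: the total weight on the cliques containing any
given vertex is exactly `1`. -/
def IsRegFracCliqueCover {V : Type*} [Fintype V] [DecidableEq V] (G : SimpleGraph V)
    (w : Finset V → ℝ) : Prop :=
  (∀ k, 0 ≤ w k ∧ w k ≤ 1) ∧ (∀ k, w k ≠ 0 → G.IsClique (k : Set V)) ∧
  ∀ v : V, ∑ k ∈ Finset.univ.filter (fun k : Finset V => v ∈ k), w k = 1

/-- The fractional clique cover number `κ_f(G)`. -/
noncomputable def fracCliqueCoverNum {V : Type*} [Fintype V] [DecidableEq V]
    (G : SimpleGraph V) : ℝ :=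
  sInf {x : ℝ | ∃ w : Finset V → ℝ, IsFracCliqueCover G w ∧ x = ∑ k : Finset V, w k}

/-- The `t`-uniform blowup of a simple graph. -/
def SimpleGraph.blowupG {V : Type*} (G : SimpleGraph V) (t : ℕ) :
    SimpleGraph (V × Fin t) where
  Adj p q := G.Adj p.1 q.1
  symm := ⟨fun _ _ h => G.adj_symm h⟩
  loopless := ⟨fun p h => G.irrefl h⟩

/-
The clique cover strategy: if the vertices are split into cliques, each clique can play the
sum-zero game (everyone guesses that the values in its clique sum to `0`), and this wins exactly
on the assignments whose clique sums all vanish, which happens with probability at least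
`s ^ (-#cliques)`. A fractional clique cover of weight `w`, scaled by `d` and rounded up, is a
cover of multiplicity `d`, i.e. a partition of the blowup `G(d)` into about `d w` cliques. Playing
the clique cover strategy on `G(d)` over `Fin s` is a strategy on `G` over `Fin (s ^ d)`, so
`gn(G, s ^ d) ≥ |V| - w - 2 ^ |V| / d`; letting `s → ∞` and then `d → ∞` gives the bound.
-/

open Finset

theorem AddMonoidHom.card_le_card_ker_mul {A B : Type*} [AddGroup A] [AddGroup B] [Finite B]
    (φ : A →+ B) : Nat.card A ≤ Nat.card φ.ker * Nat.card B := by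
  rw [← φ.ker.card_mul_index, AddSubgroup.index_ker]
  exact Nat.mul_le_mul_left _ φ.range.card_le_card_addGroup

section FibreSum

variable {W ι M : Type*} [Fintype W] [DecidableEq ι] [AddCommMonoid M]

def fibreSum (g : W → ι) : (W → M) →+ (ι → M) where
  toFun a i := ∑ y with g y = i, a y
  map_zero' := by ext; simp
  map_add' a b := by ext; simp [sum_add_distrib]

@[simp]
theorem fibreSum_apply (g : W → ι) (a : W → M) (i : ι) :
    fibreSum g a i = ∑ y with g y = i, a y := rfl

theorem fibreSum_eq_zero_iff (g : W → ι) (a : W → M) :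
    fibreSum g a = 0 ↔ ∀ x, ∑ y with g y = g x, a y = 0 := by
  refine ⟨fun h x => congrFun h (g x), fun h => funext fun i => ?_⟩
  by_cases hi : ∃ x, g x = i
  · obtain ⟨x, rfl⟩ := hi
    exact h x
  · push Not at hi
    simp [filter_false_of_mem fun y _ => hi y]

end FibreSum

section CliqueCoverStrategy

variable {W ι : Type*} [Fintype W] [DecidableEq W] [DecidableEq ι]
  {E : W → W → Prop} {s : ℕ} [NeZero s]

/-- Every fibre of `g` is a clique and plays the sum-zero game on it: each player guesses that
the values in its fibre add up to `0`. -/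
def GuessStrategy.cliqueCover (g : W → ι) (hg : ∀ x y, g x = g y → x ≠ y → E x y) :
    GuessStrategy W E s where
  f x a := -∑ y ∈ ({y | g y = g x} : Finset W).erase x, a y
  local_dep x a b h := by
    congr 1
    refine sum_congr rfl fun y hy => h y ?_
    obtain ⟨hyx, hy⟩ := mem_erase.1 hy
    exact hg y x (mem_filter.1 hy).2 hyx

theorem GuessStrategy.cliqueCover_wins_iff (g : W → ι)
    (hg : ∀ x y, g x = g y → x ≠ y → E x y) (a : W → Fin s) :
    (∀ x, (cliqueCover g hg).f x a = a x) ↔ fibreSum g a = 0 := by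
  rw [fibreSum_eq_zero_iff]
  refine forall_congr' fun x => ?_
  have hx : x ∈ ({y | g y = g x} : Finset W) := mem_filter.2 ⟨mem_univ x, rfl⟩
  rw [← add_sum_erase _ a hx, add_comm, ← neg_eq_iff_add_eq_zero]
  rfl

theorem GuessStrategy.pow_card_le_winCount_cliqueCover_mul [Fintype ι] (g : W → ι)
    (hg : ∀ x y, g x = g y → x ≠ y → E x y) :
    s ^ Fintype.card W ≤ winCount E s (cliqueCover g hg) * s ^ Fintype.card ι := by
  have hwin : winCount E s (cliqueCover g hg) = Nat.card (fibreSum (M := Fin s) g).ker :=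
    Nat.card_congr (Equiv.subtypeEquivRight (cliqueCover_wins_iff g hg))
  simpa [hwin] using (fibreSum (M := Fin s) g).card_le_card_ker_mul

end CliqueCoverStrategy

section Blowup

variable {V : Type*} {E : V → V → Prop} {s d : ℕ}

/-- A value in `Fin (s ^ d)` is read as the `d` values in `Fin s` of the copies of its vertex. -/
def blowupAssignmentEquiv : (V → Fin (s ^ d)) ≃ (V × Fin d → Fin s) :=
  (Equiv.arrowCongr (.refl V) finFunctionFinEquiv.symm).trans (Equiv.curry V (Fin d) (Fin s)).symm

@[simp]
theorem blowupAssignmentEquiv_apply (a : V → Fin (s ^ d)) (p : V × Fin d) :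
    blowupAssignmentEquiv a p = finFunctionFinEquiv.symm (a p.1) p.2 := rfl

def GuessStrategy.ofBlowup (F : GuessStrategy (V × Fin d) (blowup E d) s) :
    GuessStrategy V E (s ^ d) where
  f v a := finFunctionFinEquiv fun j => F.f (v, j) (blowupAssignmentEquiv a)
  local_dep v a b h := congrArg _ <| funext fun j =>
    F.local_dep _ _ _ fun u hu => by simp [h u.1 hu]

theorem GuessStrategy.winCount_ofBlowup [Fintype V]
    (F : GuessStrategy (V × Fin d) (blowup E d) s) :
    winCount E (s ^ d) F.ofBlowup = winCount (blowup E d) s F := by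
  refine Nat.card_congr (blowupAssignmentEquiv.subtypeEquiv fun a => ?_)
  simp only [ofBlowup, ← Equiv.eq_symm_apply, funext_iff, Prod.forall,
    blowupAssignmentEquiv_apply]

end Blowup

section GuessingNumber

variable {V : Type*} [Fintype V] {E : V → V → Prop} {s : ℕ}

theorem winP_le_one (hs : 0 < s) (F : GuessStrategy V E s) : winP E s F ≤ 1 := by
  rw [winP, div_le_one (by positivity)]
  have : winCount E s F ≤ s ^ Fintype.card V := by
    simpa [winCount, Nat.card_fun] using
      Finite.card_subtype_le fun a : V → Fin s => ∀ v, F.f v a = a v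
  exact_mod_cast this

theorem logb_winCount_le_gn (hs : 1 < s) (F : GuessStrategy V E s) (hF : 0 < winCount E s F) :
    Real.logb s (winCount E s F) ≤ gn E s := by
  have hmax : winP E s F ≤ maxWinP E s :=
    le_ciSup ⟨1, by rintro _ ⟨F', rfl⟩; exact winP_le_one (by omega) F'⟩ F
  calc Real.logb s (winCount E s F) = Fintype.card V + Real.logb s (winP E s F) := by
        rw [winP, Real.logb_div (by positivity) (by positivity), Nat.cast_pow, Real.logb_pow,
          Real.logb_self_eq_one (by exact_mod_cast hs)]
        ring
    _ ≤ gn E s := by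
        rw [gn]
        gcongr
        · exact_mod_cast hs
        · rw [winP]; positivity

end GuessingNumber

section CliqueCover

variable {V : Type*} [Fintype V] [DecidableEq V] {E : V → V → Prop}

theorem card_sub_div_le_gn_pow {ι : Type*} [Fintype ι] [DecidableEq ι] {s d : ℕ} (hs : 2 ≤ s)
    (hd : 0 < d) (g : V × Fin d → ι) (hg : ∀ x y, g x = g y → x ≠ y → blowup E d x y) :
    (Fintype.card V : ℝ) - Fintype.card ι / d ≤ gn E (s ^ d) := by
  have : NeZero s := ⟨by omega⟩
  set W := winCount E (s ^ d) (GuessStrategy.cliqueCover (s := s) g hg).ofBlowup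
  have hW : s ^ (Fintype.card V * d) ≤ W * s ^ Fintype.card ι := by
    simpa [W, GuessStrategy.winCount_ofBlowup] using
      GuessStrategy.pow_card_le_winCount_cliqueCover_mul (s := s) g hg
  have hsd : 1 < s ^ d := Nat.one_lt_pow hd.ne' (by omega)
  have hW₀ : 0 < W := Nat.pos_of_ne_zero fun h => by simp [h] at hW; omega
  calc (Fintype.card V : ℝ) - Fintype.card ι / d
      = Real.logb ((s ^ d : ℕ) : ℝ)
          ((s : ℝ) ^ (Fintype.card V * d) / s ^ Fintype.card ι) := by
        have : 0 < Real.log s := Real.log_pos (by exact_mod_cast hs)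
        rw [Real.logb, Real.log_div (by positivity) (by positivity), Real.log_pow, Real.log_pow,
          Nat.cast_pow, Real.log_pow]
        field_simp
        push_cast
        ring
    _ ≤ Real.logb ((s ^ d : ℕ) : ℝ) W := by
        refine Real.logb_le_logb_of_le (by exact_mod_cast hsd) (by positivity) ?_
        rw [div_le_iff₀ (by positivity)]
        exact_mod_cast hW
    _ ≤ gn E (s ^ d) := logb_winCount_le_gn hsd _ hW₀

end CliqueCover

section FractionalCover

variable {V : Type*} [Fintype V] [DecidableEq V] (G : SimpleGraph V)

theorem exists_blowup_cliqueCover {d : ℕ} (c : Finset V → ℕ)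
    (hcov : ∀ v, d ≤ ∑ k with v ∈ k, c k)
    (hclique : ∀ k, c k ≠ 0 → G.IsClique (k : Set V)) :
    ∃ g : V × Fin d → Σ k : Finset V, Fin (c k),
      ∀ x y, g x = g y → x ≠ y → blowup G.Adj d x y := by
  have hemb (v : V) : ∃ χ : Fin d ↪ Σ k : Finset V, Fin (c k), ∀ j, v ∈ (χ j).1 := by
    have hcard :
        Fintype.card (Fin d) ≤ Fintype.card (Σ k : {k : Finset V // v ∈ k}, Fin (c k)) := by
      rw [Fintype.card_fin, Fintype.card_sigma]
      simpa only [Fintype.card_fin] using (hcov v).trans_eq (sum_subtype _ (fun k => by simp) _)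
    obtain ⟨ψ⟩ := Function.Embedding.nonempty_of_card_le hcard
    exact ⟨ψ.trans (.sigmaMap (.subtype _) fun _ => .refl _), fun j => (ψ j).1.2⟩
  choose χ hχ using hemb
  refine ⟨fun x => χ x.1 x.2, ?_⟩
  rintro ⟨v, i⟩ ⟨u, j⟩ h hne
  change χ v i = χ u j at h
  have hvu : v ≠ u := by
    rintro rfl
    exact hne (by rw [(χ v).injective h])
  exact hclique _ (χ v i).2.pos.ne' (hχ v i) (h ▸ hχ u j) hvu

variable {G}

theorem card_sub_sum_sub_le_gn_pow {w : Finset V → ℝ} (hw : IsFracCliqueCover G w) {s d : ℕ}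
    (hs : 2 ≤ s) (hd : 0 < d) :
    (Fintype.card V : ℝ) - ∑ k, w k - Fintype.card (Finset V) / d ≤ gn G.Adj (s ^ d) := by
  -- Rounding `d • w` up gives a cover of multiplicity `d` by at most `d ∑ w + 2 ^ |V|` cliques.
  set c : Finset V → ℕ := fun k => ⌈d * w k⌉₊
  have hcov (v : V) : d ≤ ∑ k with v ∈ k, c k := by
    have : (d : ℝ) ≤ ∑ k with v ∈ k, (c k : ℝ) :=
      calc (d : ℝ) ≤ d * ∑ k with v ∈ k, w k :=
            le_mul_of_one_le_right d.cast_nonneg (hw.2.2 v)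
        _ = ∑ k with v ∈ k, d * w k := mul_sum _ _ _
        _ ≤ ∑ k with v ∈ k, (c k : ℝ) := sum_le_sum fun k _ => Nat.le_ceil _
    exact_mod_cast this
  have hclique (k : Finset V) (hk : c k ≠ 0) : G.IsClique (k : Set V) :=
    hw.2.1 k fun h => hk (by simp [c, h])
  obtain ⟨g, hg⟩ := exists_blowup_cliqueCover G c hcov hclique
  have hcard : (Fintype.card (Σ k : Finset V, Fin (c k)) : ℝ)
      ≤ d * ∑ k, w k + Fintype.card (Finset V) := by
    calc (Fintype.card (Σ k : Finset V, Fin (c k)) : ℝ) = ∑ k, (c k : ℝ) := by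
          simp [Fintype.card_sigma]
      _ ≤ ∑ k, (d * w k + 1) :=
          sum_le_sum fun k _ => (Nat.ceil_lt_add_one (mul_nonneg d.cast_nonneg (hw.1 k).1)).le
      _ = d * ∑ k, w k + Fintype.card (Finset V) := by simp [sum_add_distrib, mul_sum]
  calc (Fintype.card V : ℝ) - ∑ k, w k - Fintype.card (Finset V) / d
      = Fintype.card V - (d * ∑ k, w k + Fintype.card (Finset V)) / d := by
        field_simp
        ring
    _ ≤ Fintype.card V - Fintype.card (Σ k : Finset V, Fin (c k)) / d := by gcongr
    _ ≤ gn G.Adj (s ^ d) := card_sub_div_le_gn_pow hs hd g hg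

variable (G)

theorem isFracCliqueCover_singletons :
    IsFracCliqueCover G fun k => if k.card = 1 then (1 : ℝ) else 0 := by
  refine ⟨fun k => by by_cases h : k.card = 1 <;> simp [h], fun k hk => ?_, fun v => ?_⟩
  · obtain ⟨v, rfl⟩ := card_eq_one.1 (by simpa using hk)
    simp
  · calc (1 : ℝ) = if ({v} : Finset V).card = 1 then 1 else 0 := by simp
      _ ≤ ∑ k : Finset V with v ∈ k, if k.card = 1 then (1 : ℝ) else 0 :=
          single_le_sum (f := fun k : Finset V => if k.card = 1 then (1 : ℝ) else 0)
            (fun k _ => by positivity) (by simp)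

theorem exists_isFracCliqueCover_sum_lt {ε : ℝ} (hε : 0 < ε) :
    ∃ w, IsFracCliqueCover G w ∧ ∑ k, w k < fracCliqueCoverNum G + ε := by
  have hne : {x | ∃ w, IsFracCliqueCover G w ∧ x = ∑ k, w k}.Nonempty :=
    ⟨_, _, isFracCliqueCover_singletons G, rfl⟩
  obtain ⟨_, ⟨w, hw, rfl⟩, hlt⟩ := Real.lt_sInf_add_pos hne hε
  exact ⟨w, hw, hlt⟩

end FractionalCover

/-- If `G` is an undirected graph, then the asymptotic guessing number
satisfies `gn(G) ≥ |V(G)| − κ_f(G)`. -/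
theorem gn_ge_fracCliqueCover {V : Type*} [Fintype V] [DecidableEq V] (G : SimpleGraph V)
    (L : ℝ) (hL : Filter.Tendsto (fun s : ℕ => gn G.Adj s) Filter.atTop (nhds L)) :
    L ≥ Fintype.card V - fracCliqueCoverNum G := by
  have hcover {w : Finset V → ℝ} (hw : IsFracCliqueCover G w) :
      (Fintype.card V : ℝ) - ∑ k, w k ≤ L := by
    have hd {d : ℕ} (hd : 1 ≤ d) :
        (Fintype.card V : ℝ) - ∑ k, w k - Fintype.card (Finset V) / d ≤ L :=
      ge_of_tendsto (hL.comp (Filter.tendsto_pow_atTop (by omega)))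
        (Filter.eventually_atTop.2 ⟨2, fun s hs => card_sub_sum_sub_le_gn_pow hw hs hd⟩)
    refine le_of_tendsto ?_ (Filter.eventually_atTop.2 ⟨1, fun d => hd⟩)
    simpa using tendsto_const_nhds.sub
      (tendsto_const_div_atTop_nhds_zero_nat (Fintype.card (Finset V) : ℝ))
  refine le_of_forall_pos_le_add fun ε hε => ?_
  obtain ⟨w, hw, hlt⟩ := exists_isFracCliqueCover_sum_lt G hε
  linarith [hcover hw]
end

section
/- Given a digraph G and an induced subgraph G' obtained by deleting some vertices, for every alphabet size s the maximum winning probability of the guessing game on G is at most that on G'; equivalently gn(G,s) ≤ |V(G)| − |V(G')| + gn(G',s), and hence gn(G) ≤ |V(G)| − |V(G')| + gn(G'). In particular, gn(G) ≤ |V(G)| − α(G) where α(G) is the independence number. -/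
/-- The independence number of a digraph: the largest size of a set of vertices with no
edges between its members. -/
noncomputable def indepNum {V : Type*} [Fintype V] (E : V → V → Prop) : ℕ :=
  sSup {n | ∃ I : Finset V, I.card = n ∧ ∀ u ∈ I, ∀ v ∈ I, ¬ E u v}

/-!
Fix a strategy on `G`. Every assignment `c` of values to the deleted players yields a strategy on
the induced subgraph `G'`: the remaining players pretend the deleted ones hold `c`. A winning
assignment of `G` restricts to a winning assignment of the strategy given by its own off-`W` part,
so the winning count on `G` is at most `s ^ (|V| - |W|)` times the best winning count on `G'`.
Taking `log_s` gives the bound on guessing numbers, and applying it to a maximum independent set,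
on which every guess is a constant and the guessing number is `0`, gives the bound by `α(G)`.
-/

namespace GuessStrategy

variable {V : Type*} {E : V → V → Prop} {s : ℕ}

instance [Finite V] : Finite (GuessStrategy V E s) :=
  Finite.of_injective f fun ⟨_, _⟩ ⟨_, _⟩ h => by simpa using h

def const (x : Fin s) : GuessStrategy V E s :=
  ⟨fun _ _ => x, fun _ _ _ _ => rfl⟩

def restrict (F : GuessStrategy V E s) (W : Finset V) [DecidablePred (· ∈ W)]
    (c : {v // v ∉ W} → Fin s) : GuessStrategy {v // v ∈ W} (fun a b => E a b) s where
  f w a := F.f w ((Equiv.piEquivPiSubtypeProd (· ∈ W) _).symm (a, c))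
  local_dep w a b hab := F.local_dep w _ _ fun u hu => by
    by_cases h : u ∈ W
    · simpa [Equiv.piEquivPiSubtypeProd, h] using hab ⟨u, h⟩ hu
    · simp [Equiv.piEquivPiSubtypeProd, h]

end GuessStrategy

open GuessStrategy

section
variable {V : Type*} [Fintype V] (E : V → V → Prop) (s : ℕ)

lemma winP_le_maxWinP (F : GuessStrategy V E s) : winP E s F ≤ maxWinP E s :=
  le_ciSup (Set.finite_range _).bddAbove F

lemma winCount_le_maxWinP_mul (hs : 0 < s) (F : GuessStrategy V E s) :
    (winCount E s F : ℝ) ≤ maxWinP E s * s ^ Fintype.card V := by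
  have hpos : (0 : ℝ) < s ^ Fintype.card V := by positivity
  have := winP_le_maxWinP E s F
  rwa [winP, Nat.cast_pow, div_le_iff₀ hpos] at this

lemma maxWinP_pos (hs : 0 < s) : 0 < maxWinP E s := by
  let x : Fin s := ⟨0, hs⟩
  refine lt_of_lt_of_le ?_ (winP_le_maxWinP E s (const x))
  have : Nonempty {a : V → Fin s // ∀ v, (const x : GuessStrategy V E s).f v a = a v} :=
    ⟨⟨fun _ => x, fun _ => rfl⟩⟩
  unfold winP winCount
  exact div_pos (by exact_mod_cast Nat.card_pos) (by exact_mod_cast pow_pos hs _)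

end

section
variable {V : Type*} [Fintype V] {E : V → V → Prop} {s : ℕ}

lemma winCount_le_sum_winCount_restrict [DecidableEq V] (F : GuessStrategy V E s)
    (W : Finset V) :
    winCount E s F ≤ ∑ c, winCount _ s (F.restrict W c) := by
  let e := Equiv.piEquivPiSubtypeProd (· ∈ W) (fun _ => Fin s)
  let split : {a : V → Fin s // ∀ v, F.f v a = a v} →
      Σ c, {b // ∀ w, (F.restrict W c).f w b = b w} :=
    fun a => ⟨(e a).2, (e a).1, fun w => by
      change F.f w (e.symm (e a)) = a.1 w
      rw [e.symm_apply_apply]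
      exact a.2 w⟩
  have hsplit : Function.Injective split := by
    intro a b hab
    apply Subtype.ext <| e.injective <| Prod.ext ?_ ?_
    · exact congrArg (fun x => x.2.1) hab
    · exact congrArg Sigma.fst hab
  calc winCount E s F ≤ Nat.card (Σ c, {b // ∀ w, (F.restrict W c).f w b = b w}) :=
        Nat.card_le_card_of_injective split hsplit
    _ = ∑ c, winCount _ s (F.restrict W c) := by
        simp [winCount, Nat.card_eq_fintype_card, Fintype.card_sigma]

lemma maxWinP_le_maxWinP_induce (W : Finset V) (hs : 0 < s) :
    maxWinP E s ≤ maxWinP (fun a b : {v // v ∈ W} => E a b) s := by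
  classical
  set M := maxWinP (fun a b : {v // v ∈ W} => E a b) s
  have : Nonempty (GuessStrategy V E s) := ⟨const ⟨0, hs⟩⟩
  refine ciSup_le fun F => ?_
  have hcount : (winCount E s F : ℝ) ≤ M * s ^ Fintype.card V := calc
    (winCount E s F : ℝ) ≤ ∑ c, (winCount _ s (F.restrict W c) : ℝ) := by
      exact_mod_cast winCount_le_sum_winCount_restrict F W
    _ ≤ ∑ _c : {v // v ∉ W} → Fin s, M * s ^ W.card := by
      gcongr with c
      simpa using winCount_le_maxWinP_mul _ s hs (F.restrict W c)
    _ = M * s ^ Fintype.card V := by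
      rw [Finset.sum_const, Finset.card_univ, Fintype.card_fun, Fintype.card_fin,
        Fintype.card_subtype_compl, Fintype.card_coe, nsmul_eq_mul, Nat.cast_pow,
        mul_left_comm, ← pow_add, Nat.sub_add_cancel W.card_le_univ]
  rwa [winP, div_le_iff₀ (by positivity), Nat.cast_pow]

lemma gn_le_card_sub_add_gn_induce (W : Finset V) (hs : 2 ≤ s) :
    gn E s ≤ (Fintype.card V - W.card : ℝ) + gn (fun a b : {v // v ∈ W} => E a b) s := by
  have hlog : Real.logb s (maxWinP E s) ≤
      Real.logb s (maxWinP (fun a b : {v // v ∈ W} => E a b) s) :=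
    Real.logb_le_logb_of_le (by exact_mod_cast hs) (maxWinP_pos E s (by omega))
      (maxWinP_le_maxWinP_induce W (by omega))
  rw [gn, gn, Fintype.card_coe]
  linarith

lemma le_card_sub_add_of_tendsto_gn (W : Finset V) {L L' : ℝ}
    (hL : Filter.Tendsto (gn E) Filter.atTop (nhds L))
    (hL' : Filter.Tendsto (gn fun a b : {v // v ∈ W} => E a b) Filter.atTop (nhds L')) :
    L ≤ (Fintype.card V - W.card : ℝ) + L' :=
  le_of_tendsto_of_tendsto hL (tendsto_const_nhds.add hL') <|
    Filter.eventually_atTop.2 ⟨2, fun _ hs => gn_le_card_sub_add_gn_induce W hs⟩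

lemma winCount_eq_one_of_forall_not_adj (hE : ∀ u v, ¬ E u v) (hs : 0 < s)
    (F : GuessStrategy V E s) : winCount E s F = 1 := by
  have hconst : ∀ v a, F.f v a = F.f v fun _ => ⟨0, hs⟩ :=
    fun v a => F.local_dep v _ _ fun u huv => (hE u v huv).elim
  rw [winCount, Nat.card_eq_one_iff_exists]
  refine ⟨⟨fun v => F.f v fun _ => ⟨0, hs⟩, fun v => hconst v _⟩, fun a => ?_⟩
  ext1
  funext v
  rw [← a.2 v, hconst]

lemma gn_eq_zero_of_forall_not_adj (hE : ∀ u v, ¬ E u v) (hs : 2 ≤ s) : gn E s = 0 := by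
  have : Nonempty (GuessStrategy V E s) := ⟨const ⟨0, by omega⟩⟩
  have hmax : maxWinP E s = ((s : ℝ) ^ Fintype.card V)⁻¹ := by
    simp only [maxWinP, winP, winCount_eq_one_of_forall_not_adj hE (by omega : 0 < s),
      Nat.cast_one, Nat.cast_pow, one_div, ciSup_const]
  rw [gn, hmax, Real.logb_inv, Real.logb_pow, Real.logb_self_eq_one (by exact_mod_cast hs)]
  ring

lemma exists_card_eq_indepNum (E : V → V → Prop) :
    ∃ I : Finset V, I.card = indepNum E ∧ ∀ u ∈ I, ∀ v ∈ I, ¬ E u v :=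
  Nat.sSup_mem (s := {n | ∃ I : Finset V, I.card = n ∧ ∀ u ∈ I, ∀ v ∈ I, ¬ E u v})
    ⟨0, ∅, by simp⟩ ⟨Fintype.card V, by rintro n ⟨I, rfl, -⟩; exact I.card_le_univ⟩

lemma le_card_sub_indepNum_of_tendsto_gn {L : ℝ}
    (hL : Filter.Tendsto (gn E) Filter.atTop (nhds L)) :
    L ≤ (Fintype.card V : ℝ) - indepNum E := by
  obtain ⟨I, hI, hIndep⟩ := exists_card_eq_indepNum E
  have hzero : Filter.Tendsto (gn fun a b : {v // v ∈ I} => E a b) Filter.atTop (nhds 0) :=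
    tendsto_const_nhds.congr' <| Filter.eventually_atTop.2 ⟨2, fun _ hs =>
      (gn_eq_zero_of_forall_not_adj (fun (u v : {v // v ∈ I}) => hIndep u u.2 v v.2) hs).symm⟩
  simpa [hI] using le_card_sub_add_of_tendsto_gn I hL hzero

end

theorem induced_subgraph_bound_general {V : Type*} [Fintype V]
    (E : V → V → Prop) (W : Finset V) :
    (∀ s : ℕ, 1 ≤ s →
      maxWinP E s ≤ maxWinP (fun a b : {v // v ∈ W} => E a b) s) ∧
    (∀ s : ℕ, 2 ≤ s →
      gn E s ≤ (Fintype.card V - W.card : ℝ) + gn (fun a b : {v // v ∈ W} => E a b) s) ∧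
    (∀ L L' : ℝ,
      Filter.Tendsto (fun s : ℕ => gn E s) Filter.atTop (nhds L) →
      Filter.Tendsto (fun s : ℕ => gn (fun a b : {v // v ∈ W} => E a b) s)
        Filter.atTop (nhds L') →
      L ≤ (Fintype.card V - W.card : ℝ) + L') ∧
    (∀ L : ℝ, Filter.Tendsto (fun s : ℕ => gn E s) Filter.atTop (nhds L) →
      L ≤ (Fintype.card V : ℝ) - indepNum E) :=
  ⟨fun _ hs => maxWinP_le_maxWinP_induce W hs,
    fun _ hs => gn_le_card_sub_add_gn_induce W hs,
    fun _ _ hL hL' => le_card_sub_add_of_tendsto_gn W hL hL',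
    fun _ hL => le_card_sub_indepNum_of_tendsto_gn hL⟩

/-- For a digraph `G` and the induced subgraph `G'` on a vertex subset
`W`: for every `s` the maximum winning probability on `G` is at most that on `G'`;
equivalently `gn(G,s) ≤ |V(G)| − |V(G')| + gn(G',s)`, hence
`gn(G) ≤ |V(G)| − |V(G')| + gn(G')`; in particular `gn(G) ≤ |V(G)| − α(G)`. -/
theorem induced_subgraph_bound {V : Type*} [Fintype V] [DecidableEq V]
    (E : V → V → Prop) (hE : Irreflexive E) (W : Finset V) :
    (∀ s : ℕ, 1 ≤ s →
      maxWinP E s ≤ maxWinP (fun a b : {v // v ∈ W} => E a b) s) ∧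
    (∀ s : ℕ, 2 ≤ s →
      gn E s ≤ (Fintype.card V - W.card : ℝ) + gn (fun a b : {v // v ∈ W} => E a b) s) ∧
    (∀ L L' : ℝ,
      Filter.Tendsto (fun s : ℕ => gn E s) Filter.atTop (nhds L) →
      Filter.Tendsto (fun s : ℕ => gn (fun a b : {v // v ∈ W} => E a b) s)
        Filter.atTop (nhds L') →
      L ≤ (Fintype.card V - W.card : ℝ) + L') ∧
    (∀ L : ℝ, Filter.Tendsto (fun s : ℕ => gn E s) Filter.atTop (nhds L) →
      L ≤ (Fintype.card V : ℝ) - indepNum E) :=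
  induced_subgraph_bound_general E W
end
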